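/- arXiv:0908.3210 — 5 statements merged into one kernel-verified Lean document; each statement's English description precedes it below -/
import Mathlib

section
/- If g is a positive harmonic function on the upper half plane ℂ⁺ and y·g(iy) → 0 as y → +∞, then g is identically zero. -/
/-!
For a nonnegative harmonic function, the Poisson formula on a disk gives Harnack's inequality
`f w ≤ (R + r) / (R - r) * f c` with `r = ‖w - c‖`. Given `z` in the upper half plane and `y`
large, the disk centred at `I * y` of radius `y - z.im / 2` lies in the half plane and contains
`z` at distance at most `y - 3 * z.im / 4` from its centre, so the Harnack factor is at most
`8 * y / z.im`. Hence `z.im * g z ≤ 8 * (y * g (I * y)) → 0`.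
-/

open MeasureTheory Filter Set

/-- The Laplacian of `g : ℂ → ℝ`, computed as the sum of the second directional
derivatives in the directions `1` and `I`. -/
noncomputable def laplacian (g : ℂ → ℝ) (z : ℂ) : ℝ :=
  fderiv ℝ (fun w => fderiv ℝ g w 1) z 1 +
    fderiv ℝ (fun w => fderiv ℝ g w Complex.I) z Complex.I

/-- `g` is harmonic on the open upper half plane. -/
def HarmonicOnUHP (g : ℂ → ℝ) : Prop :=
  ContDiffOn ℝ 2 g {z : ℂ | 0 < z.im} ∧ ∀ z : ℂ, 0 < z.im → laplacian g z = 0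

open Complex Metric InnerProductSpace Laplacian

theorem ContDiffAt.laplacian_eq {g : ℂ → ℝ} {z : ℂ} (hg : ContDiffAt ℝ 2 g z) :
    _root_.laplacian g z = Δ g z := by
  have hd : DifferentiableAt ℝ (fderiv ℝ g) z :=
    (hg.fderiv_right (m := 1) (by norm_num)).differentiableAt one_ne_zero
  simp [_root_.laplacian, laplacian_eq_iteratedFDeriv_complexPlane, iteratedFDeriv_two_apply,
    fderiv_clm_apply hd (differentiableAt_const _)]

theorem HarmonicOnUHP.harmonicOnNhd {g : ℂ → ℝ} (hg : HarmonicOnUHP g) :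
    HarmonicOnNhd g {z : ℂ | 0 < z.im} := by
  have hopen : IsOpen {z : ℂ | 0 < z.im} := isOpen_lt continuous_const continuous_im
  intro z hz
  refine ⟨hg.1.contDiffAt (hopen.mem_nhds hz), ?_⟩
  filter_upwards [hopen.mem_nhds hz] with w hw
  rw [← (hg.1.contDiffAt (hopen.mem_nhds hw)).laplacian_eq]
  exact hg.2 w hw

theorem closedBall_I_mul_subset_upperHalfPlane {y δ : ℝ} (hδ : 0 < δ) :
    closedBall (I * y) (y - δ) ⊆ {z : ℂ | 0 < z.im} := by
  intro w hw
  have him := abs_im_le_norm (w - I * y)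
  rw [mem_closedBall, dist_eq_norm] at hw
  simp only [sub_im, mul_im, I_re, ofReal_im, mul_zero, I_im, ofReal_re, one_mul,
    zero_add] at him
  simp only [mem_ofPred_eq]
  linarith [neg_abs_le (w.im - y)]

namespace InnerProductSpace

theorem HarmonicOnNhd.le_mul_apply_center_of_nonneg {f : ℂ → ℝ} {c w : ℂ} {R : ℝ}
    (hf : HarmonicOnNhd f (closedBall c R)) (hnonneg : ∀ z ∈ sphere c R, 0 ≤ f z)
    (hw : w ∈ ball c R) :
    f w ≤ (R + ‖w - c‖) / (R - ‖w - c‖) * f c := by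
  have hR : |R| = R := abs_of_pos (pos_of_mem_ball hw)
  have hcont : ContinuousOn f (sphere c |R|) :=
    hR.symm ▸ hf.continuousOn.mono sphere_subset_closedBall
  calc f w = Real.circleAverage ((re ∘ herglotzRieszKernel c w) • f) c R :=
        (hf.circleAverage_re_herglotzRieszKernel_smul hw).symm
    _ ≤ Real.circleAverage (fun z ↦ ((R + ‖w - c‖) / (R - ‖w - c‖)) • f z) c R := by
        apply Real.circleAverage_mono
        · exact ((continuous_re.comp_continuousOn
            (continuousOn_herglotzRieszKernel_sphere hw)).smul hcont).circleIntegrable'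
        · exact ((continuousOn_const (c := (R + ‖w - c‖) / (R - ‖w - c‖))).smul
            hcont).circleIntegrable'
        · intro z hz
          rw [hR] at hz
          exact mul_le_mul_of_nonneg_right (re_herglotzRieszKernel_le hz hw) (hnonneg z hz)
    _ = (R + ‖w - c‖) / (R - ‖w - c‖) * f c := by
        rw [Real.circleAverage_fun_smul, smul_eq_mul, (hf.mono (by rw [hR])).circleAverage_eq]

theorem HarmonicOnNhd.eventually_im_mul_le_mul_apply_I_mul {g : ℂ → ℝ}
    (hg : HarmonicOnNhd g {z : ℂ | 0 < z.im}) (hnonneg : ∀ z : ℂ, 0 < z.im → 0 ≤ g z)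
    {z : ℂ} (hz : 0 < z.im) :
    ∀ᶠ y : ℝ in atTop, z.im * g z ≤ 8 * (y * g (I * y)) := by
  filter_upwards [eventually_ge_atTop (2 * z.re ^ 2 / z.im + 2 * z.im)] with y hy
  set b := z.im
  set r := ‖z - I * y‖
  have hy_ge : 2 * b ≤ y := by linarith [show 0 ≤ 2 * z.re ^ 2 / b by positivity]
  have hb : 2 * z.re ^ 2 ≤ (y - 2 * b) * b := (div_le_iff₀ hz).1 (by linarith)
  have hr_sq : r ^ 2 = z.re ^ 2 + (b - y) ^ 2 := by
    rw [Complex.sq_norm, normSq_apply]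
    simp only [sub_re, mul_re, I_re, ofReal_re, zero_mul, I_im, ofReal_im, mul_zero, sub_self,
      sub_zero, sub_im, mul_im, one_mul, zero_add, b]
    ring
  have hr : r ≤ y - 3 * b / 4 := by
    apply pow_le_pow_iff_left₀ (norm_nonneg _) (by linarith) two_ne_zero |>.mp
    nlinarith
  have hball := closedBall_I_mul_subset_upperHalfPlane (y := y) (half_pos hz)
  have hharnack := (hg.mono hball).le_mul_apply_center_of_nonneg
    (fun w hw ↦ hnonneg w (hball (sphere_subset_closedBall hw)))
    (show z ∈ ball (I * y) (y - b / 2) by rw [mem_ball, dist_eq_norm]; linarith)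
  rw [← mul_div_right_comm, le_div_iff₀ (by linarith)] at hharnack
  have hgz := hnonneg z hz
  have hgy := hnonneg (I * y) (by simpa using (by linarith : 0 < y))
  calc b * g z = 4 * (b / 4 * g z) := by ring
    _ ≤ 4 * ((y - b / 2 - r) * g z) := by gcongr; linarith
    _ ≤ 4 * ((y - b / 2 + r) * g (I * y)) := by rw [mul_comm _ (g z)]; gcongr
    _ ≤ 8 * (y * g (I * y)) := by nlinarith

end InnerProductSpace

theorem stmt0 (g : ℂ → ℝ) (hg : HarmonicOnUHP g)
    (hpos : ∀ z : ℂ, 0 < z.im → 0 ≤ g z)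
    (hlim : Tendsto (fun y : ℝ => y * g (Complex.I * y)) atTop (nhds 0)) :
    ∀ z : ℂ, 0 < z.im → g z = 0 := by
  intro z hz
  have hbound := hg.harmonicOnNhd.eventually_im_mul_le_mul_apply_I_mul hpos hz
  have hle : z.im * g z ≤ 8 * 0 := ge_of_tendsto (hlim.const_mul 8) hbound
  exact le_antisymm (nonpos_of_mul_nonpos_right (by simpa using hle) hz) (hpos z hz)
end

section
/- For all a > 1 and T > 0, the principal-value integrals ∫_a^{3a} exp(iT(ξ + ξ⁻¹))/(ξ - 2a) dξ are uniformly bounded. -/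
/-!
Put `g ξ = exp (i T (ξ + ξ⁻¹))` and `ξ = 2a ± t`. The truncated integral is
`∫_ε^a (g (2a + t) - g (2a - t)) / t dt`, and since the phase `T (ξ + ξ⁻¹)` is `T`-Lipschitz on
`[1, ∞)` this integrand is bounded by `2T`; so the principal value exists and equals `∫_0^a`.
For the uniform bound split at `δ = min (1/T) (a/2)` and at `a/2`. The first piece is at most
`2Tδ ≤ 2` and the last at most `2`, as the integrand is at most `2/t`. On the middle range,
`ξ ≥ 3a/2 ≥ 3/2`, so the phase derivative `T (1 - ξ⁻²)` is at least `5T/9`, and one integration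
by parts against the monotone weight `1 / (T (1 - ξ⁻²) (ξ - 2a))` bounds each half by
`O (1 / (Tδ)) = O (1)`.
-/

open MeasureTheory Filter Set Topology Complex

section PrincipalValue

variable {E : Type*} [NormedAddCommGroup E] [NormedSpace ℝ E] {F : ℝ → E} {c r ε : ℝ}

lemma integral_comp_add_add_comp_sub (h₁ : IntervalIntegrable F volume (c - r) (c - ε))
    (h₂ : IntervalIntegrable F volume (c + ε) (c + r)) :
    ∫ t in ε..r, (F (c + t) + F (c - t)) =
      (∫ ξ in c - r..c - ε, F ξ) + ∫ ξ in c + ε..c + r, F ξ := by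
  rw [intervalIntegral.integral_add (by simpa using h₂.comp_add_left c)
      (by simpa using (h₁.comp_sub_left c).symm),
    intervalIntegral.integral_comp_add_left, intervalIntegral.integral_comp_sub_left, add_comm]

lemma setOf_punctured_eq_union (hε : 0 ≤ ε) :
    {ξ : ℝ | c - r < ξ ∧ ξ < c + r ∧ ε < |ξ - c|} =
      Ioo (c - r) (c - ε) ∪ Ioo (c + ε) (c + r) := by
  ext ξ
  simp only [mem_ofPred_eq, mem_union, mem_Ioo, lt_abs]
  constructor
  · rintro ⟨h₁, h₂, h | h⟩
    · exact Or.inr ⟨by linarith, h₂⟩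
    · exact Or.inl ⟨h₁, by linarith⟩
  · rintro (⟨h₁, h₂⟩ | ⟨h₁, h₂⟩)
    · exact ⟨h₁, by linarith, Or.inr (by linarith)⟩
    · exact ⟨by linarith, h₂, Or.inl (by linarith)⟩

lemma setIntegral_punctured_eq_intervalIntegral (hε : 0 < ε) (hεr : ε ≤ r)
    (hF : ContinuousOn F (Icc (c - r) (c + r) \ {c})) :
    ∫ ξ in {ξ : ℝ | c - r < ξ ∧ ξ < c + r ∧ ε < |ξ - c|}, F ξ =
      ∫ t in ε..r, (F (c + t) + F (c - t)) := by
  have hleft : ContinuousOn F (Icc (c - r) (c - ε)) :=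
    hF.mono fun ξ hξ => ⟨⟨hξ.1, by linarith [hξ.2]⟩, (show ξ < c by linarith [hξ.2]).ne⟩
  have hright : ContinuousOn F (Icc (c + ε) (c + r)) :=
    hF.mono fun ξ hξ => ⟨⟨by linarith [hξ.1], hξ.2⟩, (show c < ξ by linarith [hξ.1]).ne'⟩
  rw [setOf_punctured_eq_union hε.le, setIntegral_union
      (disjoint_left.2 fun ξ h₁ h₂ => by linarith [h₁.2, h₂.1]) measurableSet_Ioo
      (hleft.integrableOn_Icc.mono_set Ioo_subset_Icc_self)
      (hright.integrableOn_Icc.mono_set Ioo_subset_Icc_self),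
    ← integral_Ioc_eq_integral_Ioo, ← integral_Ioc_eq_integral_Ioo,
    ← intervalIntegral.integral_of_le (by linarith),
    ← intervalIntegral.integral_of_le (by linarith),
    integral_comp_add_add_comp_sub (hleft.intervalIntegrable_of_Icc (by linarith))
      (hright.intervalIntegrable_of_Icc (by linarith))]

lemma tendsto_setIntegral_punctured (hr : 0 < r) (hF : ContinuousOn F (Icc (c - r) (c + r) \ {c}))
    (hsymm : IntegrableOn (fun t => F (c + t) + F (c - t)) (Icc 0 r)) :
    Tendsto (fun ε => ∫ ξ in {ξ : ℝ | c - r < ξ ∧ ξ < c + r ∧ ε < |ξ - c|}, F ξ) (𝓝[>] 0)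
      (𝓝 (∫ t in 0..r, (F (c + t) + F (c - t)))) := by
  have hprim := intervalIntegral.continuousOn_primitive_interval_left (uIcc_of_le hr.le ▸ hsymm)
  rw [uIcc_of_le hr.le] at hprim
  refine Tendsto.congr' ?_
    ((hprim 0 (left_mem_Icc.2 hr.le)).mono_of_mem_nhdsWithin (Icc_mem_nhdsGT hr)).tendsto
  filter_upwards [Ioo_mem_nhdsGT hr] with ε hε
  exact (setIntegral_punctured_eq_intervalIntegral hε.1 hε.2.le hF).symm

end PrincipalValue

lemma norm_exp_I_mul_ofReal_sub_le (x y : ℝ) : ‖cexp (I * x) - cexp (I * y)‖ ≤ |x - y| := by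
  have h : cexp (I * x) - cexp (I * y) = cexp (I * y) * (cexp (I * ↑(x - y)) - 1) := by
    rw [mul_sub, ← Complex.exp_add]; push_cast; ring_nf
  rw [h, norm_mul, norm_exp_I_mul_ofReal, one_mul, ← Real.norm_eq_abs]
  exact Real.norm_exp_I_mul_ofReal_sub_one_le

lemma norm_integral_exp_mul_le {θ θ' w w' : ℝ → ℝ} {α β : ℝ} (hαβ : α ≤ β)
    (hθ : ∀ x ∈ Icc α β, HasDerivAt θ (θ' x) x) (hθ' : ContinuousOn θ' (Icc α β))
    (hw : ∀ x ∈ Icc α β, HasDerivAt w (w' x) x) (hw' : ContinuousOn w' (Icc α β))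
    (hw'_nonpos : ∀ x ∈ Icc α β, w' x ≤ 0) :
    ‖∫ x in α..β, cexp (I * θ x) * (θ' x * w x : ℝ)‖ ≤ 2 * (|w α| + |w β|) := by
  set u : ℝ → ℂ := fun x => cexp (I * θ x)
  have hu : ∀ x ∈ Icc α β, HasDerivAt u (I * (u x * θ' x)) x := fun x hx => by
    convert ((hθ x hx).ofReal_comp.const_mul I).cexp using 1; simp only [u]; ring
  have hu_cont : ContinuousOn u (Icc α β) := fun x hx => (hu x hx).continuousAt.continuousWithinAt
  have hibp := intervalIntegral.integral_mul_deriv_eq_deriv_mul (v := fun x => (w x : ℂ))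
    (u' := fun x => I * (u x * θ' x)) (v' := fun x => (w' x : ℂ))
    (uIcc_of_le hαβ ▸ hu) (uIcc_of_le hαβ ▸ fun x hx => (hw x hx).ofReal_comp)
    (ContinuousOn.intervalIntegrable_of_Icc hαβ
      (continuousOn_const.mul (hu_cont.mul (continuous_ofReal.comp_continuousOn hθ'))))
    ((continuous_ofReal.comp_continuousOn hw').intervalIntegrable_of_Icc hαβ)
  have hrw : ∫ x in α..β, cexp (I * θ x) * (θ' x * w x : ℝ) =
      -I * (u β * w β - u α * w α - ∫ x in α..β, u x * w' x) := by
    have hconst : ∫ x in α..β, I * (u x * θ' x) * w x =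
        I * ∫ x in α..β, cexp (I * θ x) * (θ' x * w x : ℝ) := by
      simp only [← intervalIntegral.integral_const_mul, u, ofReal_mul, mul_assoc]
    rw [hibp, sub_sub_cancel, hconst, ← mul_assoc, neg_mul, I_mul_I, neg_neg, one_mul]
  have hw'_abs : ∫ x in α..β, |w' x| = w α - w β := by
    rw [intervalIntegral.integral_congr (g := fun x => -w' x) fun x hx =>
        abs_of_nonpos (hw'_nonpos x (uIcc_of_le hαβ ▸ hx)),
      intervalIntegral.integral_neg, intervalIntegral.integral_eq_sub_of_hasDerivAt
        (uIcc_of_le hαβ ▸ hw) (hw'.intervalIntegrable_of_Icc hαβ), neg_sub]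
  have hrem : ‖∫ x in α..β, u x * w' x‖ ≤ w α - w β := by
    refine (intervalIntegral.norm_integral_le_integral_norm hαβ).trans_eq ?_
    simp only [u, norm_mul, norm_exp_I_mul_ofReal, one_mul, norm_real, Real.norm_eq_abs, hw'_abs]
  calc ‖∫ x in α..β, cexp (I * θ x) * (θ' x * w x : ℝ)‖
      ≤ ‖u β * w β‖ + ‖u α * w α‖ + ‖∫ x in α..β, u x * w' x‖ := by
        rw [hrw, norm_mul, norm_neg, norm_I, one_mul]
        exact (norm_sub_le _ _).trans (add_le_add_left (norm_sub_le _ _) _)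
    _ ≤ |w β| + |w α| + (w α - w β) := by
        simp only [u, norm_mul, norm_exp_I_mul_ofReal, one_mul, norm_real, Real.norm_eq_abs]
        linarith
    _ ≤ 2 * (|w α| + |w β|) := by linarith [le_abs_self (w α), neg_abs_le (w β)]

noncomputable def pvKernel (a T ξ : ℝ) : ℂ :=
  Complex.exp (Complex.I * (T : ℂ) * ((ξ : ℂ) + (ξ : ℂ)⁻¹)) / ((ξ : ℂ) - 2 * (a : ℂ))

noncomputable def phase (T ξ : ℝ) : ℝ := T * (ξ + ξ⁻¹)

lemma pvKernel_eq (a T ξ : ℝ) : pvKernel a T ξ = cexp (I * phase T ξ) * ((ξ - 2 * a)⁻¹ : ℝ) := by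
  simp only [pvKernel, phase]; push_cast; rw [div_eq_mul_inv, mul_assoc]

lemma continuousOn_pvKernel (a T : ℝ) : ContinuousOn (pvKernel a T) {0, 2 * a}ᶜ := by
  intro ξ hξ
  simp only [mem_compl_iff, mem_insert_iff, mem_singleton_iff, not_or] at hξ
  have h1 : (ξ : ℂ) ≠ 0 := by exact_mod_cast hξ.1
  have h2 : (ξ : ℂ) - 2 * a ≠ 0 := by
    rw [sub_ne_zero]; exact_mod_cast hξ.2
  unfold pvKernel
  exact ContinuousAt.continuousWithinAt (by fun_prop (disch := assumption))

@[fun_prop]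
lemma measurable_pvKernel (a T : ℝ) : Measurable (pvKernel a T) := by
  unfold pvKernel; fun_prop

lemma hasDerivAt_phase (T : ℝ) {ξ : ℝ} (hξ : ξ ≠ 0) :
    HasDerivAt (phase T) (T * (1 - (ξ ^ 2)⁻¹)) ξ := by
  have h : HasDerivAt (fun y => T * (y + y⁻¹)) (T * (1 + -(ξ ^ 2)⁻¹)) ξ :=
    ((hasDerivAt_id ξ).add (hasDerivAt_inv hξ)).const_mul T
  exact h.congr_deriv (by rw [sub_eq_add_neg])

lemma abs_phase_sub_le {T x y : ℝ} (hT : 0 ≤ T) (hx : 1 ≤ x) (hy : 1 ≤ y) :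
    |phase T x - phase T y| ≤ T * |x - y| := by
  have hxy : 1 ≤ x * y := one_le_mul_of_one_le_of_one_le hx hy
  have h : phase T x - phase T y = T * (x - y) * (1 - (x * y)⁻¹) := by
    simp only [phase]; field_simp; ring
  rw [h, abs_mul, abs_mul, abs_of_nonneg hT,
    abs_of_nonneg (a := 1 - (x * y)⁻¹) (by linarith [inv_le_one_of_one_le₀ hxy])]
  exact mul_le_of_le_one_right (by positivity) (by simp only [sub_le_self_iff]; positivity)

/-- `T * pvDenom a ξ` is `(phase T)' ξ * (ξ - 2 * a)`: its inverse is the weight against which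
`pvKernel` is integrated by parts. -/
noncomputable def pvDenom (a ξ : ℝ) : ℝ := (1 - (ξ ^ 2)⁻¹) * (ξ - 2 * a)

lemma pvKernel_eq_mul_inv_pvDenom {a T ξ : ℝ} (hT : T ≠ 0) (hp : pvDenom a ξ ≠ 0) :
    pvKernel a T ξ =
      cexp (I * phase T ξ) * (T * (1 - (ξ ^ 2)⁻¹) * (T * pvDenom a ξ)⁻¹ : ℝ) := by
  rw [pvKernel_eq, pvDenom, ← mul_assoc, mul_inv (T * _),
    mul_inv_cancel_left₀ (mul_ne_zero hT (left_ne_zero_of_mul hp))]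

lemma hasDerivAt_pvDenom (a : ℝ) {ξ : ℝ} (hξ : ξ ≠ 0) :
    HasDerivAt (pvDenom a) ((ξ ^ 3 + ξ - 4 * a) / ξ ^ 3) ξ := by
  refine ((((hasDerivAt_pow 2 ξ).inv (pow_ne_zero 2 hξ)).const_sub 1).fun_mul
    ((hasDerivAt_id ξ).sub_const (2 * a))).congr_deriv ?_
  simp only [id, Pi.inv_apply, Nat.cast_ofNat]
  field_simp
  ring

lemma deriv_pvDenom_nonneg {a ξ : ℝ} (ha : 1 ≤ a) (hξ : 3 * a / 2 ≤ ξ) :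
    0 ≤ (ξ ^ 3 + ξ - 4 * a) / ξ ^ 3 :=
  div_nonneg (by nlinarith [mul_le_mul hξ hξ (by linarith) (by linarith)])
    (pow_nonneg (by linarith) 3)

lemma abs_pvDenom_ge {a ξ : ℝ} (hξ : 3 / 2 ≤ ξ) : 5 / 9 * |ξ - 2 * a| ≤ |pvDenom a ξ| := by
  have h : 5 / 9 ≤ 1 - (ξ ^ 2)⁻¹ := by
    have : (ξ ^ 2)⁻¹ ≤ 4 / 9 := by
      rw [inv_le_comm₀ (by positivity) (by norm_num)]; nlinarith
    linarith
  rw [pvDenom, abs_mul, abs_of_pos (by linarith : 0 < 1 - (ξ ^ 2)⁻¹)]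
  exact mul_le_mul_of_nonneg_right h (abs_nonneg _)

lemma norm_integral_pvKernel_le {a T α β m : ℝ} (ha : 1 ≤ a) (hT : 0 < T) (hm : 0 < m)
    (hα : 3 * a / 2 ≤ α) (hαβ : α ≤ β)
    (hsep : ∀ ξ ∈ Icc α β, m ≤ |ξ - 2 * a|) :
    ‖∫ ξ in α..β, pvKernel a T ξ‖ ≤ 8 / (T * m) := by
  have hge : ∀ ξ ∈ Icc α β, 3 * a / 2 ≤ ξ := fun ξ hξ => hα.trans hξ.1
  have hξ0 : ∀ ξ ∈ Icc α β, ξ ≠ 0 := fun ξ hξ => by linarith [hge ξ hξ]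
  have hp : ∀ ξ ∈ Icc α β, 5 / 9 * m ≤ |pvDenom a ξ| := fun ξ hξ =>
    le_trans (by linarith [hsep ξ hξ]) (abs_pvDenom_ge (by linarith [hge ξ hξ]))
  have hp0 : ∀ ξ ∈ Icc α β, pvDenom a ξ ≠ 0 := fun ξ hξ => abs_pos.1 (by linarith [hp ξ hξ])
  have hpd := fun ξ hξ => hasDerivAt_pvDenom a (hξ0 ξ hξ)
  have hw : ∀ ξ ∈ Icc α β, HasDerivAt (fun ξ => (T * pvDenom a ξ)⁻¹)
      (-(T * ((ξ ^ 3 + ξ - 4 * a) / ξ ^ 3)) / (T * pvDenom a ξ) ^ 2) ξ := fun ξ hξ =>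
    ((hpd ξ hξ).const_mul T).inv (mul_ne_zero hT.ne' (hp0 ξ hξ))
  have hw' : ContinuousOn
      (fun ξ => -(T * ((ξ ^ 3 + ξ - 4 * a) / ξ ^ 3)) / (T * pvDenom a ξ) ^ 2) (Icc α β) := by
    refine ContinuousOn.div (by fun_prop (disch := exact fun x hx => pow_ne_zero _ (hξ0 x hx))) ?_
      fun ξ hξ => pow_ne_zero 2 (mul_ne_zero hT.ne' (hp0 ξ hξ))
    exact (continuousOn_const.mul fun ξ hξ => (hpd ξ hξ).continuousAt.continuousWithinAt).pow 2
  have hw_le : ∀ ξ ∈ Icc α β, |(T * pvDenom a ξ)⁻¹| ≤ 9 / (5 * T * m) := fun ξ hξ => by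
    rw [abs_inv, abs_mul, abs_of_pos hT,
      inv_le_comm₀ (mul_pos hT (abs_pos.2 (hp0 ξ hξ))) (by positivity), inv_div]
    nlinarith [hp ξ hξ]
  have hosc := norm_integral_exp_mul_le hαβ (fun ξ hξ => hasDerivAt_phase T (hξ0 ξ hξ))
    (continuousOn_const.mul (continuousOn_const.sub
      ((continuousOn_pow 2).inv₀ fun x hx => pow_ne_zero 2 (hξ0 x hx)))) hw hw' fun ξ hξ =>
      div_nonpos_of_nonpos_of_nonneg
        (neg_nonpos.2 (mul_nonneg hT.le (deriv_pvDenom_nonneg ha (hge ξ hξ)))) (sq_nonneg _)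
  calc ‖∫ ξ in α..β, pvKernel a T ξ‖ ≤ 2 * (9 / (5 * T * m) + 9 / (5 * T * m)) := by
        rw [intervalIntegral.integral_congr fun ξ hξ =>
          pvKernel_eq_mul_inv_pvDenom hT.ne' (hp0 ξ (uIcc_of_le hαβ ▸ hξ))]
        exact hosc.trans (by gcongr <;> exact hw_le _ ⟨by linarith, by linarith⟩)
    _ = 36 / 5 / (T * m) := by ring
    _ ≤ 8 / (T * m) := by gcongr; norm_num

lemma pvKernel_add_pvKernel (a T t : ℝ) :
    pvKernel a T (2 * a + t) + pvKernel a T (2 * a - t) =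
      (cexp (I * phase T (2 * a + t)) - cexp (I * phase T (2 * a - t))) * (t⁻¹ : ℝ) := by
  rw [pvKernel_eq, pvKernel_eq, show 2 * a + t - 2 * a = t by ring,
    show 2 * a - t - 2 * a = -t by ring, inv_neg, ofReal_neg]
  ring

lemma norm_pvKernel_add_pvKernel_le_two_mul {a T t : ℝ} (hT : 0 ≤ T) (ha : 1 ≤ a)
    (ht : t ∈ Icc 0 a) :
    ‖pvKernel a T (2 * a + t) + pvKernel a T (2 * a - t)‖ ≤ 2 * T := by
  rw [pvKernel_add_pvKernel, norm_mul, norm_real, Real.norm_eq_abs, abs_inv]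
  rcases ht.1.eq_or_lt with rfl | ht₀
  · rw [abs_zero, inv_zero, mul_zero]; positivity
  calc ‖cexp (I * phase T (2 * a + t)) - cexp (I * phase T (2 * a - t))‖ * |t|⁻¹
      ≤ T * |2 * a + t - (2 * a - t)| * |t|⁻¹ := by
        gcongr
        exact (norm_exp_I_mul_ofReal_sub_le _ _).trans
          (abs_phase_sub_le hT (by linarith) (by linarith [ht.2]))
    _ = 2 * T := by
        rw [show 2 * a + t - (2 * a - t) = 2 * t by ring, abs_mul, abs_two]
        field_simp [ht₀.ne']

lemma norm_pvKernel_add_pvKernel_le_two_div (a T t : ℝ) :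
    ‖pvKernel a T (2 * a + t) + pvKernel a T (2 * a - t)‖ ≤ 2 / |t| := by
  rw [pvKernel_add_pvKernel, norm_mul, norm_real, Real.norm_eq_abs, abs_inv, ← div_eq_mul_inv]
  gcongr
  exact (norm_sub_le _ _).trans (by rw [norm_exp_I_mul_ofReal, norm_exp_I_mul_ofReal]; norm_num)

lemma integrableOn_pvKernel_add_pvKernel {a T : ℝ} (ha : 1 ≤ a) (hT : 0 ≤ T) :
    IntegrableOn (fun t => pvKernel a T (2 * a + t) + pvKernel a T (2 * a - t)) (Icc 0 a) :=
  .of_bound measure_Icc_lt_top (by fun_prop) (2 * T)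
    ((ae_restrict_iff' measurableSet_Icc).2 <| .of_forall fun _ ht =>
      norm_pvKernel_add_pvKernel_le_two_mul hT ha ht)

lemma norm_integral_inv_half_pvKernel_add_pvKernel_le {a T : ℝ} (ha : 1 ≤ a) (hT : 0 < T)
    (hTa : T⁻¹ ≤ a / 2) :
    ‖∫ t in T⁻¹..a / 2, (pvKernel a T (2 * a + t) + pvKernel a T (2 * a - t))‖ ≤ 16 := by
  have hT' : 0 < T⁻¹ := inv_pos.2 hT
  have hint : ∀ u v, a ≤ u → u ≤ v → (∀ ξ ∈ Icc u v, T⁻¹ ≤ |ξ - 2 * a|) →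
      IntervalIntegrable (pvKernel a T) volume u v := fun u v hu huv hsep =>
    ((continuousOn_pvKernel a T).mono fun ξ hξ => by
      have := hsep ξ hξ
      simp only [mem_compl_iff, mem_insert_iff, mem_singleton_iff, not_or]
      refine ⟨by linarith [hξ.1], fun h => ?_⟩
      rw [h, sub_self, abs_zero] at this
      linarith).intervalIntegrable_of_Icc huv
  have hleft : ∀ ξ ∈ Icc (2 * a - a / 2) (2 * a - T⁻¹), T⁻¹ ≤ |ξ - 2 * a| := fun ξ hξ => by
    rw [abs_sub_comm, abs_of_nonneg (by linarith [hξ.2])]; linarith [hξ.2]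
  have hright : ∀ ξ ∈ Icc (2 * a + T⁻¹) (2 * a + a / 2), T⁻¹ ≤ |ξ - 2 * a| := fun ξ hξ => by
    rw [abs_of_nonneg (by linarith [hξ.1])]; linarith [hξ.1]
  have hosc : ∀ α β, 3 * a / 2 ≤ α → α ≤ β → (∀ ξ ∈ Icc α β, T⁻¹ ≤ |ξ - 2 * a|) →
      ‖∫ ξ in α..β, pvKernel a T ξ‖ ≤ 8 := fun α β hα hαβ hsep => by
    simpa [hT.ne'] using norm_integral_pvKernel_le ha hT hT' hα hαβ hsep
  rw [integral_comp_add_add_comp_sub (hint _ _ (by linarith) (by linarith) hleft)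
    (hint _ _ (by linarith) (by linarith) hright)]
  calc _ ≤ ‖∫ ξ in 2 * a - a / 2..2 * a - T⁻¹, pvKernel a T ξ‖
        + ‖∫ ξ in 2 * a + T⁻¹..2 * a + a / 2, pvKernel a T ξ‖ := norm_add_le _ _
    _ ≤ 8 + 8 := add_le_add (hosc _ _ (by linarith) (by linarith) hleft)
        (hosc _ _ (by linarith) (by linarith) hright)
    _ = 16 := by norm_num

lemma norm_integral_pvKernel_add_pvKernel_le {a T : ℝ} (ha : 1 ≤ a) (hT : 0 < T) :
    ‖∫ t in 0..a, (pvKernel a T (2 * a + t) + pvKernel a T (2 * a - t))‖ ≤ 20 := by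
  set H := fun t => pvKernel a T (2 * a + t) + pvKernel a T (2 * a - t)
  have hint : ∀ u v, 0 ≤ u → u ≤ v → v ≤ a → IntervalIntegrable H volume u v :=
    fun u v hu huv hv => (intervalIntegrable_iff_integrableOn_Icc_of_le huv).2
      ((integrableOn_pvKernel_add_pvKernel ha hT.le).mono_set (Icc_subset_Icc hu hv))
  set δ := min T⁻¹ (a / 2)
  have hδ : 0 ≤ δ := le_min (by positivity) (by linarith)
  have hδa : δ ≤ a / 2 := min_le_right _ _
  have hnear : ‖∫ t in 0..δ, H t‖ ≤ 2 := by
    refine (intervalIntegral.norm_integral_le_of_norm_le_const (C := 2 * T) fun t ht => ?_).trans ?_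
    · rw [uIoc_of_le hδ] at ht
      exact norm_pvKernel_add_pvKernel_le_two_mul hT.le ha ⟨ht.1.le, by linarith [ht.2]⟩
    · rw [sub_zero, abs_of_nonneg hδ]
      calc 2 * T * δ ≤ 2 * T * T⁻¹ := by gcongr; exact min_le_left _ _
        _ = 2 := by field_simp
  have hfar : ‖∫ t in a / 2..a, H t‖ ≤ 2 := by
    refine (intervalIntegral.norm_integral_le_of_norm_le_const (C := 4 / a) fun t ht => ?_).trans ?_
    · rw [uIoc_of_le (by linarith)] at ht
      refine (norm_pvKernel_add_pvKernel_le_two_div a T t).trans ?_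
      rw [abs_of_pos (by linarith [ht.1]), div_le_div_iff₀ (by linarith [ht.1]) (by linarith)]
      linarith [ht.1]
    · rw [abs_of_nonneg (by linarith)]
      field_simp
      linarith
  have hmid : ‖∫ t in δ..a / 2, H t‖ ≤ 16 := by
    rcases min_cases T⁻¹ (a / 2) with ⟨hmin, hle⟩ | ⟨hmin, -⟩
    · rw [show δ = T⁻¹ from hmin]
      exact norm_integral_inv_half_pvKernel_add_pvKernel_le ha hT hle
    · rw [show δ = a / 2 from hmin, intervalIntegral.integral_same, norm_zero]
      norm_num
  rw [← intervalIntegral.integral_add_adjacent_intervals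
      (hint 0 (a / 2) le_rfl (by linarith) (by linarith))
      (hint (a / 2) a (by linarith) (by linarith) le_rfl),
    ← intervalIntegral.integral_add_adjacent_intervals (hint 0 δ le_rfl hδ (by linarith))
      (hint δ (a / 2) hδ hδa (by linarith))]
  calc _ ≤ ‖∫ t in 0..δ, H t‖ + ‖∫ t in δ..a / 2, H t‖ + ‖∫ t in a / 2..a, H t‖ := norm_add₃_le
    _ ≤ 20 := by linarith

/-- For all `a > 1` and `T > 0`, the principal-value integrals
`∫_a^{3a} exp(iT(ξ + ξ⁻¹))/(ξ - 2a) dξ` exist and are uniformly bounded. -/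
theorem stmt3 : ∃ C : ℝ, ∀ a T : ℝ, 1 < a → 0 < T → ∃ L : ℂ,
    Tendsto (fun ε : ℝ =>
        ∫ ξ in {ξ : ℝ | a < ξ ∧ ξ < 3 * a ∧ ε < |ξ - 2 * a|},
          Complex.exp (Complex.I * (T : ℂ) * ((ξ : ℂ) + (ξ : ℂ)⁻¹)) / ((ξ : ℂ) - 2 * (a : ℂ)))
      (nhdsWithin 0 (Set.Ioi (0 : ℝ))) (nhds L) ∧ ‖L‖ ≤ C := by
  refine ⟨20, fun a T ha hT => ⟨_, ?_, norm_integral_pvKernel_add_pvKernel_le ha.le hT⟩⟩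
  have hcont : ContinuousOn (pvKernel a T) (Icc (2 * a - a) (2 * a + a) \ {2 * a}) :=
    (continuousOn_pvKernel a T).mono fun ξ hξ => by
      simp only [mem_compl_iff, mem_insert_iff, mem_singleton_iff, not_or]
      exact ⟨by linarith [hξ.1.1], hξ.2⟩
  have h := tendsto_setIntegral_punctured (by linarith) hcont
    (integrableOn_pvKernel_add_pvKernel ha.le hT.le)
  rw [show 2 * a - a = a by ring, show 2 * a + a = 3 * a by ring] at h
  exact h
end

section
/- sup over 1/2 < a < 1 and T > 0 of |∫_{-θ₁}^{θ₁} e^{iT cos θ}/(2a - 1 - iθ) dθ| is finite, for any fixed θ₁ ∈ (0, π/2). -/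
/-!
Writing `c = 2a - 1 > 0`, we have `1 / (c - iθ) = (c + iθ) / (c² + θ²)`. Since `e^{iT cos θ}` is
even, the part carrying `iθ` is odd and integrates to zero over `[-θ₁, θ₁]`; the remaining part is
bounded in norm by `∫ c / (c² + θ²) dθ`, a difference of two arctangents, hence at most `π`.
-/

open Complex MeasureTheory intervalIntegral

theorem Function.Odd.intervalIntegral_eq_zero {E : Type*} [NormedAddCommGroup E]
    [NormedSpace ℝ E] {f : ℝ → E} (hf : f.Odd) (r : ℝ) : ∫ x in -r..r, f x = 0 := by
  have h : ∫ x in -r..r, f x = -∫ x in -r..r, f x :=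
    calc ∫ x in -r..r, f x = ∫ x in -r..r, f (-x) := by rw [integral_comp_neg, neg_neg]
      _ = -∫ x in -r..r, f x := by simp only [hf.eq, intervalIntegral.integral_neg]
  have := IsAddTorsionFree.of_isTorsionFree ℝ E
  exact self_eq_neg.mp h

theorem Complex.inv_ofReal_sub_I_mul {c : ℝ} (hc : c ≠ 0) (θ : ℝ) :
    ((c : ℂ) - I * θ)⁻¹ = ↑(c / (c ^ 2 + θ ^ 2)) + I * ↑(θ / (c ^ 2 + θ ^ 2)) := by
  have hden_ne : (c : ℂ) ^ 2 + θ ^ 2 ≠ 0 := by exact_mod_cast (by positivity : c ^ 2 + θ ^ 2 ≠ 0)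
  refine inv_eq_of_mul_eq_one_right ?_
  push_cast
  field_simp
  ring_nf
  rw [I_sq]
  ring

theorem Function.Even.intervalIntegral_div_ofReal_sub_I_mul {u : ℝ → ℂ} (hu : u.Even)
    (hcont : Continuous u) {c : ℝ} (hc : c ≠ 0) (r : ℝ) :
    ∫ θ in -r..r, u θ / (c - I * θ) = ∫ θ in -r..r, u θ * ↑(c / (c ^ 2 + θ ^ 2)) := by
  have hden_ne : ∀ θ : ℝ, c ^ 2 + θ ^ 2 ≠ 0 := fun θ => by positivity
  have hodd : Function.Odd fun θ => u θ * (I * ↑(θ / (c ^ 2 + θ ^ 2))) := fun θ => by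
    simp only [hu.eq, neg_sq, neg_div, ofReal_neg]
    ring
  have heven_int : Continuous fun θ => u θ * ↑(c / (c ^ 2 + θ ^ 2)) :=
    hcont.mul (continuous_ofReal.comp (continuous_const.div (by fun_prop) hden_ne))
  have hodd_int : Continuous fun θ => u θ * (I * ↑(θ / (c ^ 2 + θ ^ 2))) :=
    hcont.mul (continuous_const.mul (continuous_ofReal.comp (continuous_id.div (by fun_prop) hden_ne)))
  simp_rw [div_eq_mul_inv (u _), inv_ofReal_sub_I_mul hc, mul_add]
  rw [integral_add (heven_int.intervalIntegrable _ _) (hodd_int.intervalIntegrable _ _),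
    hodd.intervalIntegral_eq_zero, add_zero]

theorem norm_integral_mul_div_sq_add_sq_le_pi {u : ℝ → ℂ} (hu : ∀ θ, ‖u θ‖ ≤ 1) {c : ℝ}
    (hc : 0 < c) (a b : ℝ) : ‖∫ θ in a..b, u θ * ↑(c / (c ^ 2 + θ ^ 2))‖ ≤ Real.pi := by
  have hweight : ∀ θ : ℝ, 0 ≤ c / (c ^ 2 + θ ^ 2) := fun θ => by positivity
  calc ‖∫ θ in a..b, u θ * ↑(c / (c ^ 2 + θ ^ 2))‖
      ≤ |∫ θ in a..b, c / (c ^ 2 + θ ^ 2)| := by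
        refine norm_integral_le_abs_of_norm_le (ae_of_all _ fun θ => ?_)
          (Continuous.intervalIntegrable ?_ _ _)
        · rw [norm_mul, norm_real, Real.norm_of_nonneg (hweight θ)]
          exact mul_le_of_le_one_left (hweight θ) (hu θ)
        · exact continuous_const.div (by fun_prop) fun θ => by positivity
    _ = |Real.arctan (b / c) - Real.arctan (a / c)| := by rw [integral_div_sq_add_sq]
    _ ≤ Real.pi := by
        have := Real.arctan_lt_pi_div_two (b / c)
        have := Real.arctan_lt_pi_div_two (a / c)
        have := Real.neg_pi_div_two_lt_arctan (b / c)
        have := Real.neg_pi_div_two_lt_arctan (a / c)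
        exact abs_sub_le_iff.2 ⟨by linarith, by linarith⟩

theorem stmt5_general (θ₁ : ℝ) :
    ∃ C : ℝ, ∀ a T : ℝ, 1 / 2 < a → a < 1 → 0 < T →
      ‖∫ θ in (-θ₁)..θ₁,
          Complex.exp (Complex.I * (T : ℂ) * (Real.cos θ : ℂ)) /
            (2 * (a : ℂ) - 1 - Complex.I * (θ : ℂ))‖ ≤ C := by
  refine ⟨Real.pi, fun a T ha _ _ => ?_⟩
  have hc : (0 : ℝ) < 2 * a - 1 := by linarith
  have hu_even : Function.Even fun θ : ℝ => exp (I * T * (Real.cos θ : ℂ)) := fun θ => by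
    simp only [Real.cos_neg]
  have hu_norm : ∀ θ : ℝ, ‖exp (I * T * (Real.cos θ : ℂ))‖ ≤ 1 := fun θ => by
    rw [mul_assoc, ← ofReal_mul, norm_exp_I_mul_ofReal]
  have hden : ∀ θ : ℝ, 2 * (a : ℂ) - 1 - I * θ = ↑(2 * a - 1) - I * θ := fun θ => by push_cast; rfl
  simp_rw [hden]
  rw [hu_even.intervalIntegral_div_ofReal_sub_I_mul (by fun_prop) hc.ne']
  exact norm_integral_mul_div_sq_add_sq_le_pi hu_norm hc _ _

/-- For fixed `θ₁ ∈ (0, π/2)`, the integrals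
`∫_{-θ₁}^{θ₁} e^{iT cos θ}/(2a - 1 - iθ) dθ` are bounded uniformly over
`a ∈ (1/2, 1)` and `T > 0`. -/
theorem stmt5 (θ₁ : ℝ) (hθ₁ : θ₁ ∈ Set.Ioo 0 (Real.pi / 2)) :
    ∃ C : ℝ, ∀ a T : ℝ, 1 / 2 < a → a < 1 → 0 < T →
      ‖∫ θ in (-θ₁)..θ₁,
          Complex.exp (Complex.I * (T : ℂ) * (Real.cos θ : ℂ)) /
            (2 * (a : ℂ) - 1 - Complex.I * (θ : ℂ))‖ ≤ C :=
  stmt5_general θ₁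
end

section
/- If q ∈ L²(ℝ⁺), then (1/T) ∫₀^T (∫_{t-√t}^{t+√t} |q(x)| dx)² dt → 0 as T → ∞. -/
/-!
By Cauchy–Schwarz, the square of the window integral `F t` is at most `2√t ∫_{window t} q²`.
Integrating over `t ∈ (0, T]` and exchanging the order of integration, a point `x` lies in the
window of `t` only for `t` in an interval of length `2(1 + √x)`, and there `2√t ≤ 2(1 + √x)`;
hence `∫₀^T F² ≤ 8 ∫₀^{2T} (1 + x) q²(x) dx` for `T ≥ 1`. Dividing by `T`, the weight
`(1 + x) / T` is bounded on `(0, 2T]` and tends to `0` pointwise, so dominated convergence finishes.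
Working with lower Lebesgue integrals throughout avoids all integrability side conditions.
-/

open MeasureTheory Filter Set

open scoped ENNReal Topology

theorem sq_lintegral_le_measure_univ_mul_lintegral_sq {α : Type*} [MeasurableSpace α]
    {μ : Measure α} {f : α → ℝ≥0∞} (hf : AEMeasurable f μ) :
    (∫⁻ x, f x ∂μ) ^ 2 ≤ μ univ * ∫⁻ x, f x ^ 2 ∂μ := by
  have h := ENNReal.lintegral_mul_norm_pow_le (hf.pow_const 2) aemeasurable_const
    (g := fun _ => 1) (p := 2⁻¹) (q := 2⁻¹) (by norm_num) (by norm_num) (by norm_num) (μ := μ)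
  have hsqrt (x : α) : (f x ^ 2) ^ (2⁻¹ : ℝ) = f x := by
    simpa using ENNReal.pow_rpow_inv_natCast two_ne_zero (f x)
  simp only [hsqrt, ENNReal.one_rpow, mul_one, lintegral_const, one_mul,
    ← ENNReal.mul_rpow_of_nonneg _ _ (by norm_num : (0 : ℝ) ≤ 2⁻¹)] at h
  rw [mul_comm, ← ENNReal.rpow_two]
  exact (ENNReal.le_rpow_inv_iff two_pos).1 h

theorem enorm_integral_sq_le_measure_univ_mul {α E : Type*} [MeasurableSpace α]
    [NormedAddCommGroup E] [NormedSpace ℝ E] {μ : Measure α} {f : α → E}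
    (hf : AEStronglyMeasurable f μ) :
    ‖∫ x, f x ∂μ‖ₑ ^ 2 ≤ μ univ * ∫⁻ x, ‖f x‖ₑ ^ 2 ∂μ :=
  (pow_le_pow_left' (enorm_integral_le_lintegral_enorm f) 2).trans
    (sq_lintegral_le_measure_univ_mul_lintegral_sq hf.enorm)

/-- Half-open, so that it lies in `Ioi 0`; it differs from the closed window by a null set. -/
def sqrtWindow (t : ℝ) : Set ℝ := Ioc (max 0 (t - √t)) (t + √t)

theorem sqrtWindow_subset_Ioi (t : ℝ) : sqrtWindow t ⊆ Ioi 0 :=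
  fun _ hx => (le_max_left _ _).trans_lt hx.1

theorem volume_sqrtWindow_le (t : ℝ) : volume (sqrtWindow t) ≤ ENNReal.ofReal (2 * √t) := by
  rw [sqrtWindow, Real.volume_Ioc]
  exact ENNReal.ofReal_le_ofReal (by linarith [le_max_right 0 (t - √t)])

theorem abs_sub_le_sqrt_of_mem_sqrtWindow {t x : ℝ} (hx : x ∈ sqrtWindow t) : |x - t| ≤ √t :=
  abs_sub_le_iff.2 ⟨by linarith [hx.2], by linarith [(le_max_right 0 (t - √t)).trans_lt hx.1]⟩

theorem sqrt_le_one_add_sqrt_of_mem_sqrtWindow {t x : ℝ} (hx : x ∈ sqrtWindow t) :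
    √t ≤ 1 + √x := by
  have hlt : t - √t < x := (le_max_right _ _).trans_lt hx.1
  have hx0 : 0 ≤ x := (sqrtWindow_subset_Ioi t hx).le
  rcases le_or_gt t 0 with ht | ht
  · rw [Real.sqrt_eq_zero_of_nonpos ht]; positivity
  · nlinarith [Real.sq_sqrt ht.le, Real.sq_sqrt hx0, Real.sqrt_nonneg x, Real.sqrt_nonneg t]

theorem measurableSet_sqrtWindow (t : ℝ) : MeasurableSet (sqrtWindow t) := measurableSet_Ioc

theorem measurableSet_sqrtWindow_graph : MeasurableSet {p : ℝ × ℝ | p.2 ∈ sqrtWindow p.1} :=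
  (measurableSet_lt (by fun_prop) measurable_snd).inter
    (measurableSet_le measurable_snd (by fun_prop))

theorem enorm_sq_setIntegral_sqrtWindow_le {q : ℝ → ℝ}
    (hq : AEStronglyMeasurable q (volume.restrict (Ioi 0))) (t : ℝ) :
    ‖∫ x in Icc (max 0 (t - √t)) (t + √t), |q x|‖ₑ ^ 2 ≤
      ENNReal.ofReal (2 * √t) * ∫⁻ x in sqrtWindow t, ‖q x‖ₑ ^ 2 := by
  rw [integral_Icc_eq_integral_Ioc]
  refine (enorm_integral_sq_le_measure_univ_mul
    (hq.mono_set (sqrtWindow_subset_Ioi t)).norm).trans ?_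
  simp only [Measure.restrict_apply_univ, Real.norm_eq_abs, Real.enorm_abs]
  gcongr
  exact volume_sqrtWindow_le t

theorem lintegral_Ioc_indicator_sqrtWindow_le (T x : ℝ) :
    ∫⁻ t in Ioc 0 T, {t | x ∈ sqrtWindow t}.indicator (fun t => ENNReal.ofReal (2 * √t)) t ≤
      (Ioc 0 (T + √T)).indicator (fun x => 8 * ENNReal.ofReal (1 + x)) x := by
  by_cases hx : x ∈ Ioc 0 (T + √T)
  · rw [indicator_of_mem hx]
    set r := 1 + √x
    calc _ ≤ ∫⁻ t, (Icc (x - r) (x + r)).indicator (fun _ => ENNReal.ofReal (2 * r)) t := by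
          refine (setLIntegral_le_lintegral _ _).trans (lintegral_mono fun t => ?_)
          by_cases ht : x ∈ sqrtWindow t
          · have hsqrt := sqrt_le_one_add_sqrt_of_mem_sqrtWindow ht
            have habs := abs_sub_le_sqrt_of_mem_sqrtWindow ht
            have hr : t ∈ Icc (x - r) (x + r) :=
              ⟨by linarith [le_abs_self (x - t)], by linarith [neg_abs_le (x - t)]⟩
            rw [indicator_of_mem (s := {t | x ∈ sqrtWindow t}) ht, indicator_of_mem hr]
            gcongr
          · rw [indicator_of_notMem (s := {t | x ∈ sqrtWindow t}) ht]
            exact zero_le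
      _ = ENNReal.ofReal (4 * r ^ 2) := by
          rw [lintegral_indicator_const measurableSet_Icc, Real.volume_Icc,
            ← ENNReal.ofReal_mul (by positivity)]
          ring_nf
      _ ≤ 8 * ENNReal.ofReal (1 + x) := by
          rw [← ENNReal.ofReal_ofNat, ← ENNReal.ofReal_mul (by norm_num)]
          refine ENNReal.ofReal_le_ofReal ?_
          nlinarith [Real.sq_sqrt hx.1.le, sq_nonneg (√x - 1)]
  · have hnot (t : ℝ) (ht : t ∈ Ioc 0 T) : x ∉ sqrtWindow t := fun hxt =>
      hx ⟨sqrtWindow_subset_Ioi t hxt, hxt.2.trans (add_le_add ht.2 (Real.sqrt_le_sqrt ht.2))⟩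
    rw [indicator_of_notMem hx, setLIntegral_congr_fun measurableSet_Ioc fun t ht =>
      indicator_of_notMem (s := {t | x ∈ sqrtWindow t}) (hnot t ht) _, lintegral_zero]

theorem lintegral_Ioc_mul_setLIntegral_sqrtWindow_le {g : ℝ → ℝ≥0∞} (hg : AEMeasurable g)
    (T : ℝ) :
    ∫⁻ t in Ioc 0 T, ENNReal.ofReal (2 * √t) * ∫⁻ x in sqrtWindow t, g x ≤
      8 * ∫⁻ x in Ioc 0 (T + √T), ENNReal.ofReal (1 + x) * g x := by
  set w : ℝ → ℝ → ℝ≥0∞ := fun x =>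
    {t | x ∈ sqrtWindow t}.indicator fun t => ENNReal.ofReal (2 * √t)
  have hw : Measurable (Function.uncurry fun t x => w x t) :=
    (by fun_prop : Measurable fun p : ℝ × ℝ => ENNReal.ofReal (2 * √p.1)).indicator
      measurableSet_sqrtWindow_graph
  calc ∫⁻ t in Ioc 0 T, ENNReal.ofReal (2 * √t) * ∫⁻ x in sqrtWindow t, g x
      = ∫⁻ t in Ioc 0 T, ∫⁻ x, w x t * g x := by
        refine lintegral_congr fun t => ?_
        rw [← lintegral_const_mul' _ _ ENNReal.ofReal_ne_top,
          ← lintegral_indicator (measurableSet_sqrtWindow t)]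
        refine lintegral_congr fun x => ?_
        by_cases h : x ∈ sqrtWindow t <;> simp [w, h]
    _ = ∫⁻ x, ∫⁻ t in Ioc 0 T, w x t * g x :=
        lintegral_lintegral_swap (hw.aemeasurable.mul hg.comp_snd)
    _ ≤ ∫⁻ x, (Ioc 0 (T + √T)).indicator (fun x => 8 * ENNReal.ofReal (1 + x)) x * g x := by
        refine lintegral_mono fun x => ?_
        have hw_x : Measurable (w x) := hw.comp measurable_prodMk_right
        rw [lintegral_mul_const _ hw_x]
        gcongr
        exact lintegral_Ioc_indicator_sqrtWindow_le T x
    _ = 8 * ∫⁻ x in Ioc 0 (T + √T), ENNReal.ofReal (1 + x) * g x := by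
        simp_rw [← indicator_mul_left, mul_assoc]
        rw [lintegral_indicator measurableSet_Ioc, lintegral_const_mul' _ _ ENNReal.ofNat_ne_top]

theorem lintegral_Ioc_enorm_sq_setIntegral_le {q : ℝ → ℝ}
    (hq : AEStronglyMeasurable q (volume.restrict (Ioi 0))) {g : ℝ → ℝ≥0∞} (hg : AEMeasurable g)
    (hqg : ∀ x ∈ Ioi 0, ‖q x‖ₑ ^ 2 ≤ g x) (T : ℝ) :
    ∫⁻ t in Ioc 0 T, ‖∫ x in Icc (max 0 (t - √t)) (t + √t), |q x|‖ₑ ^ 2 ≤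
      8 * ∫⁻ x in Ioc 0 (T + √T), ENNReal.ofReal (1 + x) * g x := calc
  _ ≤ ∫⁻ t in Ioc 0 T, ENNReal.ofReal (2 * √t) * ∫⁻ x in sqrtWindow t, g x := by
      refine lintegral_mono fun t => (enorm_sq_setIntegral_sqrtWindow_le hq t).trans ?_
      gcongr _ * ?_
      exact setLIntegral_mono' (measurableSet_sqrtWindow t) fun x hx =>
        hqg x (sqrtWindow_subset_Ioi t hx)
  _ ≤ _ := lintegral_Ioc_mul_setLIntegral_sqrtWindow_le hg T

theorem tendsto_ofReal_inv_mul_setLIntegral_Ioc_atTop {g : ℝ → ℝ≥0∞} (hg : AEMeasurable g)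
    (hg_fin : ∫⁻ x, g x ≠ ∞) (C : ℝ) :
    Tendsto (fun T => ENNReal.ofReal T⁻¹ * ∫⁻ x in Ioc 0 (C * T), ENNReal.ofReal (1 + x) * g x)
      atTop (𝓝 0) := by
  set F : ℝ → ℝ → ℝ≥0∞ := fun T => (Ioc 0 (C * T)).indicator fun x =>
    ENNReal.ofReal T⁻¹ * (ENNReal.ofReal (1 + x) * g x)
  have hF (T : ℝ) : ENNReal.ofReal T⁻¹ * ∫⁻ x in Ioc 0 (C * T), ENNReal.ofReal (1 + x) * g x =
      ∫⁻ x, F T x := by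
    rw [lintegral_indicator measurableSet_Ioc, lintegral_const_mul' _ _ ENNReal.ofReal_ne_top]
  simp_rw [hF]
  have h_lim := tendsto_lintegral_filter_of_dominated_convergence' (F := F) (f := 0) (l := atTop)
    (fun x => ENNReal.ofReal (1 + C) * g x)
    (Eventually.of_forall fun T => (aemeasurable_const.mul
      ((by fun_prop : Measurable fun x : ℝ => ENNReal.ofReal (1 + x)).aemeasurable.mul
        hg)).indicator measurableSet_Ioc) ?_ ?_ ?_
  · simpa using h_lim
  · filter_upwards [eventually_ge_atTop 1] with T hT
    refine ae_of_all _ fun x => ?_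
    simp only [F]
    by_cases hx : x ∈ Ioc 0 (C * T)
    · rw [indicator_of_mem hx, ← mul_assoc, ← ENNReal.ofReal_mul (by positivity)]
      gcongr
      rw [inv_mul_le_iff₀ (by positivity)]
      nlinarith [hx.2, hx.1]
    · rw [indicator_of_notMem hx]
      exact zero_le
  · rw [lintegral_const_mul' _ _ ENNReal.ofReal_ne_top]
    exact ENNReal.mul_ne_top ENNReal.ofReal_ne_top hg_fin
  · filter_upwards [ae_lt_top' hg hg_fin] with x hx
    have h_weight : Tendsto (fun T : ℝ => ENNReal.ofReal T⁻¹ * (ENNReal.ofReal (1 + x) * g x))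
        atTop (𝓝 0) := by
      simpa using ENNReal.Tendsto.mul_const (ENNReal.tendsto_ofReal tendsto_inv_atTop_zero)
        (Or.inr (ENNReal.mul_ne_top ENNReal.ofReal_ne_top hx.ne))
    exact tendsto_of_tendsto_of_tendsto_of_le_of_le tendsto_const_nhds h_weight
      (fun _ => zero_le) fun T => indicator_le_self _ _ x

/-- If `q ∈ L²(ℝ⁺)`, then
`(1/T) ∫₀^T (∫_{max(0, t-√t)}^{t+√t} |q(x)| dx)² dt → 0` as `T → ∞`. -/
theorem stmt6 (q : ℝ → ℝ)
    (hq : MemLp q 2 (volume.restrict (Set.Ioi (0 : ℝ)))) :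
    Tendsto (fun T : ℝ =>
        (1 / T) * ∫ t in Set.Ioc (0 : ℝ) T,
          (∫ x in Set.Icc (max 0 (t - Real.sqrt t)) (t + Real.sqrt t), |q x|) ^ 2)
      atTop (nhds 0) := by
  set g : ℝ → ℝ≥0∞ := (Ioi 0).indicator fun x => ‖q x‖ₑ ^ 2
  have hg : AEMeasurable g :=
    (aemeasurable_indicator_iff measurableSet_Ioi).2 (hq.1.enorm.pow_const 2)
  have hg_fin : ∫⁻ x, g x ≠ ∞ := by
    rw [lintegral_indicator measurableSet_Ioi]
    simpa [enorm_pow] using hq.integrable_sq.2.ne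
  have hqg (x : ℝ) (hx : x ∈ Ioi 0) : ‖q x‖ₑ ^ 2 ≤ g x :=
    (indicator_of_mem hx fun x => ‖q x‖ₑ ^ 2).ge
  have h_bound : ∀ᶠ T in atTop,
      ‖(1 / T) * ∫ t in Ioc 0 T, (∫ x in Icc (max 0 (t - √t)) (t + √t), |q x|) ^ 2‖ₑ ≤
        8 * (ENNReal.ofReal T⁻¹ * ∫⁻ x in Ioc 0 (2 * T), ENNReal.ofReal (1 + x) * g x) := by
    filter_upwards [eventually_ge_atTop 1] with T hT
    rw [enorm_mul, one_div, Real.enorm_of_nonneg (by positivity), mul_left_comm]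
    gcongr
    calc _ ≤ ∫⁻ t in Ioc 0 T, ‖∫ x in Icc (max 0 (t - √t)) (t + √t), |q x|‖ₑ ^ 2 :=
          (enorm_integral_le_lintegral_enorm _).trans_eq (by simp only [enorm_pow])
      _ ≤ 8 * ∫⁻ x in Ioc 0 (T + √T), ENNReal.ofReal (1 + x) * g x :=
          lintegral_Ioc_enorm_sq_setIntegral_le hq.1 hg hqg T
      _ ≤ 8 * ∫⁻ x in Ioc 0 (2 * T), ENNReal.ofReal (1 + x) * g x := by
          gcongr
          linarith [Real.sqrt_le_self_iff.2 (Or.inr hT)]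
  rw [tendsto_zero_iff_enorm_tendsto_zero]
  refine tendsto_of_tendsto_of_tendsto_of_le_of_le' tendsto_const_nhds ?_
    (Eventually.of_forall fun _ => zero_le) h_bound
  simpa using ENNReal.Tendsto.const_mul
    (tendsto_ofReal_inv_mul_setLIntegral_Ioc_atTop hg hg_fin 2) (Or.inr ENNReal.ofNat_ne_top)
end

section
/- Let f, h be analytic on ℂ⁺ with 0 ≤ Im h(k) ≤ Im f(k) for all k ∈ ℂ⁺, and suppose f(iy) − h(iy) = o(1/y) as y → +∞. Then f = h + c for a real constant c; if moreover f(iy) − h(iy) → 0, then f = h. -/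
/-!
`g := f - h` is holomorphic on the upper half-plane with `Im g ≥ 0`. Harnack's inequality on the
disc of radius `y - 1/2` about `iy` gives `Im g(i) ≤ 4y · Im g(iy)`, so the hypothesis
`y · g(iy) → 0` forces `Im g(i) = 0`. Then `Im g` attains its minimum at `i`, which by the open
mapping theorem makes `g` constant, and `y · g(iy) → 0` makes this constant `0`.
-/

open Filter Set Metric Real InnerProductSpace Topology

namespace InnerProductSpace

theorem HarmonicOnNhd.apply_le_mul_apply_center {v : ℂ → ℝ} {c w : ℂ} {R : ℝ}
    (hv : HarmonicOnNhd v (closedBall c R))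
    (hnonneg : ∀ z ∈ sphere c R, 0 ≤ v z) (hw : w ∈ ball c R) :
    v w ≤ (R + ‖w - c‖) / (R - ‖w - c‖) * v c := by
  have hvR : HarmonicOnNhd v (closedBall c |R|) := by
    rwa [abs_of_pos (pos_of_mem_ball hw)]
  have hint : CircleIntegrable v c R :=
    (hvR.continuousOn.mono sphere_subset_closedBall).circleIntegrable'
  have hPint : CircleIntegrable (poissonKernel c w • v) c R := by
    refine (ContinuousOn.smul ?_ (hvR.continuousOn.mono sphere_subset_closedBall)).circleIntegrable'
    rw [poissonKernel_eq_re_herglotzRieszKernel]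
    exact Complex.continuous_re.comp_continuousOn (continuousOn_herglotzRieszKernel_sphere hw)
  calc v w = circleAverage (poissonKernel c w • v) c R :=
        (hv.circleAverage_poissonKernel_smul hw).symm
    _ ≤ circleAverage (fun z => ((R + ‖w - c‖) / (R - ‖w - c‖)) • v z) c R := by
        refine circleAverage_mono hPint hint.const_smul fun z hz => ?_
        rw [abs_of_pos (pos_of_mem_ball hw)] at hz
        refine mul_le_mul_of_nonneg_right ?_ (hnonneg z hz)
        rw [poissonKernel_eq_re_herglotzRieszKernel]
        exact re_herglotzRieszKernel_le hz hw
    _ = _ := by rw [circleAverage_fun_smul, hvR.circleAverage_eq, smul_eq_mul]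

theorem HarmonicOnNhd.apply_I_le_mul_apply_I_mul {v : ℂ → ℝ}
    (hv : HarmonicOnNhd v {z : ℂ | 0 < z.im}) (hnonneg : ∀ z : ℂ, 0 < z.im → 0 ≤ v z)
    {y : ℝ} (hy : 1 ≤ y) :
    v Complex.I ≤ 4 * y * v (Complex.I * y) := by
  have hIy : ‖Complex.I - Complex.I * y‖ = y - 1 := by
    rw [← mul_one_sub, norm_mul, Complex.norm_I, one_mul, ← Complex.ofReal_one,
      ← Complex.ofReal_sub, Complex.norm_real, Real.norm_eq_abs, abs_of_nonpos (by linarith)]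
    ring
  have hball : closedBall (Complex.I * y) (y - 1 / 2) ⊆ {z : ℂ | 0 < z.im} := by
    intro z hz
    have hdist : |z.im - y| ≤ y - 1 / 2 := by
      calc |z.im - y| = |(z - Complex.I * y).im| := by simp
        _ ≤ ‖z - Complex.I * y‖ := Complex.abs_im_le_norm _
        _ ≤ y - 1 / 2 := mem_closedBall_iff_norm.1 hz
    show 0 < z.im
    linarith [neg_abs_le (z.im - y)]
  have hharnack := HarmonicOnNhd.apply_le_mul_apply_center (fun z hz => hv z (hball hz))
    (fun z hz => hnonneg z (hball (sphere_subset_closedBall hz)))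
    (mem_ball_iff_norm.2 (by rw [hIy]; linarith))
  rw [hIy] at hharnack
  have hvIy : 0 ≤ v (Complex.I * y) := hnonneg _ (by simpa using (by linarith : (0 : ℝ) < y))
  calc v Complex.I ≤ (y - 1 / 2 + (y - 1)) / (y - 1 / 2 - (y - 1)) * v (Complex.I * y) := hharnack
    _ = (4 * y - 3) * v (Complex.I * y) := by ring
    _ ≤ 4 * y * v (Complex.I * y) := by nlinarith

theorem HarmonicOnNhd.apply_I_eq_zero_of_tendsto {v : ℂ → ℝ}
    (hv : HarmonicOnNhd v {z : ℂ | 0 < z.im}) (hnonneg : ∀ z : ℂ, 0 < z.im → 0 ≤ v z)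
    (hlim : Tendsto (fun y : ℝ => y * v (Complex.I * y)) atTop (𝓝 0)) :
    v Complex.I = 0 := by
  refine le_antisymm ?_ (hnonneg _ (by simp))
  have h4 : Tendsto (fun y : ℝ => 4 * y * v (Complex.I * y)) atTop (𝓝 0) := by
    simpa [mul_assoc] using hlim.const_mul 4
  exact ge_of_tendsto h4 ((eventually_ge_atTop 1).mono
    fun y hy => hv.apply_I_le_mul_apply_I_mul hnonneg hy)

end InnerProductSpace

theorem AnalyticOnNhd.eq_const_of_isMinOn_im {g : ℂ → ℂ} {U : Set ℂ} {z₀ : ℂ}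
    (hg : AnalyticOnNhd ℂ g U) (hU : IsOpen U) (hUc : IsPreconnected U) (hz₀ : z₀ ∈ U)
    (hmin : IsMinOn (fun z => (g z).im) U z₀) :
    ∀ z ∈ U, g z = g z₀ := by
  rcases hg.is_constant_or_isOpen hUc with ⟨w, hw⟩ | hopen
  · exact fun z hz => (hw z hz).trans (hw z₀ hz₀).symm
  · have himage : g '' U ⊆ {w : ℂ | (g z₀).im ≤ w.im} := by
      rintro _ ⟨z, hz, rfl⟩
      exact hmin hz
    have hinterior : g z₀ ∈ interior {w : ℂ | (g z₀).im ≤ w.im} :=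
      interior_mono himage ((hopen U subset_rfl hU).interior_eq.symm ▸ mem_image_of_mem g hz₀)
    rw [Complex.interior_setOfPred_le_im] at hinterior
    exact ((lt_irrefl (g z₀).im) hinterior).elim

theorem eq_zero_of_tendsto_smul_atTop {E : Type*} [NormedAddCommGroup E] [NormedSpace ℝ E]
    {a : E} (h : Tendsto (fun y : ℝ => y • a) atTop (𝓝 0)) : a = 0 := by
  have hprod := tendsto_inv_atTop_zero.smul h
  rw [zero_smul] at hprod
  refine tendsto_nhds_unique (tendsto_const_nhds.congr' ?_) hprod
  filter_upwards [eventually_ne_atTop 0] with y hy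
  rw [smul_smul, inv_mul_cancel₀ hy, one_smul]

/-- Let `f, h` be analytic on `ℂ⁺` with `0 ≤ Im h(k) ≤ Im f(k)` there, and suppose
`f(iy) − h(iy) = o(1/y)` as `y → +∞` (i.e. `y·(f(iy) − h(iy)) → 0`). Then
`f = h + c` for a real constant `c`; if moreover `f(iy) − h(iy) → 0`, then `f = h`
on `ℂ⁺`. -/
theorem stmt17 (f h : ℂ → ℂ)
    (hf : DifferentiableOn ℂ f {z : ℂ | 0 < z.im})
    (hh : DifferentiableOn ℂ h {z : ℂ | 0 < z.im})
    (him : ∀ k : ℂ, 0 < k.im → 0 ≤ (h k).im ∧ (h k).im ≤ (f k).im)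
    (hsmall : Tendsto (fun y : ℝ => (y : ℂ) * (f (Complex.I * y) - h (Complex.I * y)))
      atTop (nhds 0)) :
    (∃ c : ℝ, ∀ z : ℂ, 0 < z.im → f z = h z + (c : ℂ)) ∧
    (Tendsto (fun y : ℝ => f (Complex.I * y) - h (Complex.I * y)) atTop (nhds 0) →
      ∀ z : ℂ, 0 < z.im → f z = h z) := by
  set g : ℂ → ℂ := fun z => f z - h z
  have hU : IsOpen {z : ℂ | 0 < z.im} := isOpen_lt continuous_const Complex.continuous_im
  have hg : AnalyticOnNhd ℂ g {z : ℂ | 0 < z.im} := (hf.sub hh).analyticOnNhd hU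
  have hgim : ∀ z : ℂ, 0 < z.im → 0 ≤ (g z).im := fun z hz => by
    simpa [g, sub_nonneg] using (him z hz).2
  have hgI_im : (g Complex.I).im = 0 := by
    refine HarmonicOnNhd.apply_I_eq_zero_of_tendsto (fun z hz => (hg z hz).harmonicAt_im) hgim ?_
    simpa [Function.comp_def, g] using (Complex.continuous_im.tendsto 0).comp hsmall
  have hconst : ∀ z : ℂ, 0 < z.im → g z = g Complex.I :=
    hg.eq_const_of_isMinOn_im hU (convex_halfSpace_im_gt 0).isPreconnected (by simp)
      fun z hz => show (g Complex.I).im ≤ (g z).im from hgI_im ▸ hgim z hz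
  have hgI : g Complex.I = 0 := by
    refine eq_zero_of_tendsto_smul_atTop (hsmall.congr' ?_)
    filter_upwards [eventually_gt_atTop 0] with y hy
    rw [Complex.real_smul, ← hconst (Complex.I * y) (by simpa using hy)]
  have hfh : ∀ z : ℂ, 0 < z.im → f z = h z := fun z hz =>
    sub_eq_zero.1 ((hconst z hz).trans hgI)
  exact ⟨⟨0, fun z hz => by simp [hfh z hz]⟩, fun _ => hfh⟩
end
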